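/- arXiv:0906.0240 — 5 statements merged into one kernel-verified Lean document; each statement's English description precedes it below -/
import Mathlib

section
/- Define a(n) = Σ_{k=1}^{n-1} C(n,k) · Σ_{m=1}^{n-k} C(n-k,m) · (1/2)^(k·m). Then for all n ≥ 0, a(n) ≤ 5.6 · (7/4)^n. -/
/-- The double sum `a(n) = Σ_{k=1}^{n-1} C(n,k) Σ_{m=1}^{n-k} C(n-k,m) (1/2)^{km}`. -/
noncomputable def a (n : ℕ) : ℝ :=
  ∑ k ∈ Finset.Icc 1 (n - 1), (n.choose k : ℝ) *
    ∑ m ∈ Finset.Icc 1 (n - k), ((n - k).choose m : ℝ) * (1 / 2) ^ (k * m)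

/-!
For `k = 1` the inner sum is at most `(3/2)^(n-1)`, contributing `n (3/2)^(n-1) ≤ 1.6 (7/4)^n`.
For `k ≥ 2` one has `k m ≥ k + 2m - 2`, so the inner sum is at most
`4 (1/2)^k Σ_m C(n-k,m) (1/4)^m ≤ 4 (1/2)^k (5/4)^(n-k)`, and summing over `k` with the binomial
theorem gives at most `4 (1/2 + 5/4)^n = 4 (7/4)^n`.
-/

open Finset

lemma sum_pow_mul_pow_mul_choose_le_add_pow {R : Type*} [CommSemiring R] [PartialOrder R]
    [IsOrderedRing R] {x y : R} (hx : 0 ≤ x) (hy : 0 ≤ y) {n : ℕ} {s : Finset ℕ}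
    (hs : s ⊆ range (n + 1)) :
    ∑ k ∈ s, x ^ k * y ^ (n - k) * n.choose k ≤ (x + y) ^ n := by
  rw [add_pow]
  exact sum_le_sum_of_subset_of_nonneg hs fun k _ _ ↦ by positivity

lemma Icc_subset_range_succ {a b n : ℕ} (h : b ≤ n) : Icc a b ⊆ range (n + 1) :=
  fun _ hk ↦ mem_range.2 (Nat.lt_succ_of_le ((mem_Icc.1 hk).2.trans h))

lemma sum_Icc_choose_mul_pow_le {R : Type*} [CommSemiring R] [PartialOrder R] [IsOrderedRing R]
    {x : R} (hx : 0 ≤ x) (N : ℕ) :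
    ∑ m ∈ Icc 1 N, (N.choose m : R) * x ^ m ≤ (1 + x) ^ N := by
  simpa [add_comm, mul_comm] using
    sum_pow_mul_pow_mul_choose_le_add_pow hx zero_le_one (Icc_subset_range_succ (a := 1) le_rfl)

lemma half_pow_mul_le {k m : ℕ} (hk : 2 ≤ k) (hm : 1 ≤ m) :
    (1 / 2 : ℝ) ^ (k * m) ≤ 4 * (1 / 2) ^ k * (1 / 4) ^ m := by
  obtain ⟨k, rfl⟩ := Nat.exists_eq_add_of_le' hk
  obtain ⟨m, rfl⟩ := Nat.exists_eq_add_of_le' hm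
  calc (1 / 2 : ℝ) ^ ((k + 2) * (m + 1))
      ≤ (1 / 2) ^ (k + 2 * m + 2) :=
        pow_le_pow_of_le_one (by norm_num) (by norm_num) (by nlinarith)
    _ = 4 * (1 / 2) ^ (k + 2) * (1 / 4) ^ (m + 1) := by
        rw [show (1 / 4 : ℝ) = (1 / 2) ^ 2 by norm_num, ← pow_mul]
        ring

lemma inner_sum_le_of_two_le {k : ℕ} (hk : 2 ≤ k) (N : ℕ) :
    ∑ m ∈ Icc 1 N, (N.choose m : ℝ) * (1 / 2) ^ (k * m) ≤ 4 * (1 / 2) ^ k * (5 / 4) ^ N :=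
  calc ∑ m ∈ Icc 1 N, (N.choose m : ℝ) * (1 / 2) ^ (k * m)
      ≤ ∑ m ∈ Icc 1 N, 4 * (1 / 2) ^ k * ((N.choose m : ℝ) * (1 / 4) ^ m) := by
        refine sum_le_sum fun m hm ↦ ?_
        exact (mul_le_mul_of_nonneg_left (half_pow_mul_le hk (mem_Icc.mp hm).1)
          (by positivity)).trans_eq (by ring)
    _ = 4 * (1 / 2) ^ k * ∑ m ∈ Icc 1 N, (N.choose m : ℝ) * (1 / 4) ^ m := by rw [mul_sum]
    _ ≤ 4 * (1 / 2) ^ k * (5 / 4) ^ N := by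
        gcongr
        exact (sum_Icc_choose_mul_pow_le (by norm_num) N).trans_eq (by norm_num)

lemma inner_sum_one_le (N : ℕ) :
    ∑ m ∈ Icc 1 N, (N.choose m : ℝ) * (1 / 2) ^ (1 * m) ≤ (3 / 2) ^ N := by
  simp only [one_mul]
  exact (sum_Icc_choose_mul_pow_le (by norm_num) N).trans_eq (by norm_num)

lemma a_le (n : ℕ) : a n ≤ n * (3 / 2) ^ (n - 1) + 4 * (7 / 4) ^ n := by
  have hterm : ∀ k ∈ Icc 1 (n - 1),
      (n.choose k : ℝ) * ∑ m ∈ Icc 1 (n - k), ((n - k).choose m : ℝ) * (1 / 2) ^ (k * m)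
        ≤ (if k = 1 then (n : ℝ) * (3 / 2) ^ (n - 1) else 0) +
          4 * ((1 / 2) ^ k * (5 / 4) ^ (n - k) * n.choose k) := by
    intro k hk
    rcases (mem_Icc.mp hk).1.eq_or_lt with rfl | hk2
    · have := mul_le_mul_of_nonneg_left (inner_sum_one_le (n - 1)) (n.cast_nonneg (α := ℝ))
      simp only [Nat.choose_one_right, if_true]
      linarith [show (0 : ℝ) ≤ 4 * ((1 / 2) ^ 1 * (5 / 4) ^ (n - 1) * n) by positivity]
    · have := mul_le_mul_of_nonneg_left (inner_sum_le_of_two_le hk2 (n - k))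
        (n.choose k).cast_nonneg (α := ℝ)
      rw [if_neg hk2.ne']
      linarith
  have hfirst : ∑ k ∈ Icc 1 (n - 1), (if k = 1 then (n : ℝ) * (3 / 2) ^ (n - 1) else 0)
      ≤ n * (3 / 2) ^ (n - 1) := by
    rw [sum_ite_eq']
    split_ifs
    exacts [le_rfl, by positivity]
  have hsecond : ∑ k ∈ Icc 1 (n - 1), (1 / 2 : ℝ) ^ k * (5 / 4) ^ (n - k) * n.choose k
      ≤ (7 / 4) ^ n :=
    (sum_pow_mul_pow_mul_choose_le_add_pow (by norm_num) (by norm_num)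
      (Icc_subset_range_succ (n.sub_le 1))).trans_eq (by norm_num)
  calc a n ≤ ∑ k ∈ Icc 1 (n - 1), ((if k = 1 then (n : ℝ) * (3 / 2) ^ (n - 1) else 0) +
          4 * ((1 / 2) ^ k * (5 / 4) ^ (n - k) * n.choose k)) := sum_le_sum hterm
    _ ≤ n * (3 / 2) ^ (n - 1) + 4 * (7 / 4) ^ n := by
        rw [sum_add_distrib, ← mul_sum]
        linarith

lemma nat_mul_three_halves_pow_le (n : ℕ) : (n : ℝ) * (3 / 2) ^ (n - 1) ≤ 1.6 * (7 / 4) ^ n := by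
  rcases lt_or_ge n 6 with hn | hn
  · interval_cases n <;> norm_num
  induction n, hn using Nat.le_induction with
  | base => norm_num
  | succ n hn ih =>
    have hn' : (6 : ℝ) ≤ n := by exact_mod_cast hn
    have hpow : (3 / 2 : ℝ) ^ (n + 1 - 1) = 3 / 2 * (3 / 2) ^ (n - 1) := by
      rw [← pow_succ', Nat.add_sub_cancel, Nat.sub_add_cancel (by omega : 1 ≤ n)]
    calc ((n + 1 : ℕ) : ℝ) * (3 / 2) ^ (n + 1 - 1)
        = (n + 1) * (3 / 2) * (3 / 2) ^ (n - 1) := by rw [hpow]; push_cast; ring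
      _ ≤ 7 / 4 * n * (3 / 2) ^ (n - 1) := by
        gcongr (?_ : ℝ) * _
        linarith
      _ ≤ 7 / 4 * (1.6 * (7 / 4) ^ n) := by rw [mul_assoc]; gcongr
      _ = 1.6 * (7 / 4) ^ (n + 1) := by ring

theorem a_upper_bound (n : ℕ) : a n ≤ 5.6 * (7 / 4) ^ n := by
  linarith [a_le n, nat_mul_three_halves_pow_le n]
end

section
/- Let G be a uniformly random tournament on n ≥ 2 labeled vertices and let a, s be distinct vertices. Let A be the event that there is no directed path from a to s. Then P(A) ≤ (1/2)^(n-2) · (1 + 3.2·(7/8)^(n-1)). -/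
/-- A tournament on `Fin n`: an orientation of each edge `{i,j}`, `i < j`, of the complete
graph. `ω ⟨(i,j),h⟩ = true` means the edge is oriented `i → j`. Each of the `2^(n choose 2)`
orientations is equally likely under the uniform probability `Pr`. -/
abbrev Orient (n : ℕ) : Type := {p : Fin n × Fin n // p.1 < p.2} → Bool

/-- The edge between `i` and `j` is oriented from `i` to `j`. -/
def dir {n : ℕ} (ω : Orient n) (i j : Fin n) : Prop :=
  (∃ h : i < j, ω ⟨(i, j), h⟩ = true) ∨ (∃ h : j < i, ω ⟨(j, i), h⟩ = false)

/-- There is a directed path from `a` to `s` in the tournament `ω`. -/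
def reaches {n : ℕ} (ω : Orient n) (a s : Fin n) : Prop :=
  Relation.TransGen (dir ω) a s

/-- The probability of the event `E` for a uniformly random tournament on `n` vertices. -/
noncomputable def Pr (n : ℕ) (E : Orient n → Prop) : ℝ :=
  haveI := Classical.decPred E
  ((Finset.univ.filter E).card : ℝ) / (Fintype.card (Orient n) : ℝ)

/-!
If `s` is not reachable from `a`, then `a` together with the vertices reachable from it is a set
avoiding `s` that no edge leaves. For a fixed set `S` with `#S = j + 1` this event fixes the
orientation of all `(j + 1)(n - j - 1)` edges between `S` and its complement, so a union bound over
`S = {a} ∪ S₀` with `S₀ ⊆ V ∖ {a, s}` gives, with `m = n - 2`,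
`P(A) ≤ 2^{-(m+1)} ∑_j C(m, j) 2^{-j(m-j)}`.
In the last sum the terms `j = 0, m` give `2`, the terms `j = 1, m - 1` give `4m 2^{-m}`, and,
since `j(m - j) ≥ 2m - 4` for the others, these contribute at most `2^m 2^{-(2m-4)} = 16 · 2^{-m}`.
Finally `(4m + 16) 2^{-m} ≤ 5.6 (7/8)^m` for `m ≥ 3`.
-/

open Finset

lemma sum_range_add_four {M : Type*} [AddCommMonoid M] (g : ℕ → M) (k : ℕ) :
    ∑ j ∈ range (k + 4), g j = g 0 + g 1 + ∑ i ∈ range k, g (i + 2) + g (k + 2) + g (k + 3) := by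
  rw [sum_range_succ, sum_range_succ, sum_range_succ', sum_range_succ']
  abel

lemma four_mul_add_sixteen_mul_half_pow_le {m : ℕ} (hm : 3 ≤ m) :
    (4 * m + 16) * (1 / 2 : ℝ) ^ m ≤ 5.6 * (7 / 8) ^ m := by
  induction m, hm using Nat.le_induction with
  | base => norm_num
  | succ m _ ih =>
    calc (4 * ((m + 1 : ℕ) : ℝ) + 16) * (1 / 2) ^ (m + 1)
        ≤ 7 / 8 * ((4 * m + 16) * (1 / 2) ^ m) := by
          rw [pow_succ]
          push_cast
          nlinarith [pow_nonneg (show (0 : ℝ) ≤ 1 / 2 by norm_num) m, (m.cast_nonneg : (0 : ℝ) ≤ m)]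
      _ ≤ 7 / 8 * (5.6 * (7 / 8) ^ m) := by gcongr
      _ = 5.6 * (7 / 8) ^ (m + 1) := by ring

lemma sum_range_choose_add_two_mul_half_pow_le (k : ℕ) :
    ∑ i ∈ range k, ((k + 3).choose (i + 2) : ℝ) * (1 / 2) ^ ((i + 2) * (k + 3 - (i + 2))) ≤
      16 * (1 / 2) ^ (k + 3) := by
  have hbinom : ∑ i ∈ range k, (k + 3).choose (i + 2) ≤ 2 ^ (k + 3) := by
    rw [← Nat.sum_range_choose, sum_range_add_four]
    omega
  calc _ ≤ ∑ i ∈ range k, ((k + 3).choose (i + 2) : ℝ) * (1 / 2) ^ (2 * k + 2) := by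
        refine sum_le_sum fun i hi => mul_le_mul_of_nonneg_left ?_ (by positivity)
        refine pow_le_pow_of_le_one (by norm_num) (by norm_num) ?_
        obtain ⟨t, rfl⟩ : ∃ t, k = i + 1 + t := ⟨k - i - 1, by have := mem_range.1 hi; omega⟩
        rw [show i + 1 + t + 3 - (i + 2) = t + 2 by omega]
        nlinarith
    _ ≤ 2 ^ (k + 3) * (1 / 2) ^ (2 * k + 2) := by
        rw [← sum_mul]
        gcongr
        exact_mod_cast hbinom
    _ = 16 * (1 / 2) ^ (k + 3) := by
        simp only [one_div, inv_pow]
        field_simp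
        ring

lemma sum_choose_mul_half_pow_le (m : ℕ) :
    ∑ j ∈ range (m + 1), (m.choose j : ℝ) * (1 / 2) ^ (j * (m - j)) ≤ 2 + 5.6 * (7 / 8) ^ m := by
  obtain hm | ⟨k, rfl⟩ : m < 3 ∨ ∃ k, m = k + 3 :=
    (lt_or_ge m 3).imp_right fun h => ⟨m - 3, by omega⟩
  · interval_cases m <;> norm_num [sum_range_succ]
  rw [sum_range_add_four]
  simp only [Nat.choose_zero_right, Nat.choose_one_right, Nat.choose_succ_self_right,
    Nat.choose_self]
  rw [show k + 3 - 1 = k + 2 by omega, show k + 3 - (k + 2) = 1 by omega]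
  simp only [Nat.sub_self, mul_zero, zero_mul, pow_zero, one_mul, mul_one, Nat.cast_one]
  have middle := sum_range_choose_add_two_mul_half_pow_le k
  have ends := four_mul_add_sixteen_mul_half_pow_le (m := k + 3) (by omega)
  have hsucc : (1 / 2 : ℝ) ^ (k + 2) = 2 * (1 / 2) ^ (k + 3) := by
    rw [pow_succ]
    ring
  rw [hsucc]
  push_cast at ends
  simp only [Nat.cast_add, Nat.cast_ofNat, Nat.cast_one]
  linarith

lemma card_filter_forall_mem_eq {ι : Type*} [Fintype ι] [DecidableEq ι] (T : Finset ι)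
    (g : ι → Bool) : #{ω : ι → Bool | ∀ e ∈ T, ω e = g e} = 2 ^ #Tᶜ := by
  have : ({ω : ι → Bool | ∀ e ∈ T, ω e = g e} : Finset _) =
      Fintype.piFinset (fun e => if e ∈ T then {g e} else univ) := by
    ext ω
    simp only [mem_filter, mem_univ, true_and, Fintype.mem_piFinset]
    refine forall_congr' fun e => ?_
    split_ifs <;> simp_all
  rw [this, Fintype.card_piFinset]
  simp only [apply_ite card, card_singleton, card_univ, Fintype.card_bool]
  rw [prod_ite, prod_const_one, one_mul, prod_const, filter_not, filter_mem_eq_inter,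
    univ_inter, compl_eq_univ_sdiff]

namespace Orient

variable {n : ℕ}

abbrev Edge (n : ℕ) := {p : Fin n × Fin n // p.1 < p.2}

lemma Pr_eq (E : Orient n → Prop) [DecidablePred E] :
    Pr n E = #{ω | E ω} / 2 ^ Fintype.card (Edge n) := by
  simp only [Pr, Fintype.card_fun, Fintype.card_bool, Nat.cast_pow, Nat.cast_ofNat]
  congr 3
  exact filter_congr_decidable _ _ _

lemma Pr_forall_mem_eq (T : Finset (Edge n)) (g : Edge n → Bool) :
    Pr n (fun ω => ∀ e ∈ T, ω e = g e) = (1 / 2) ^ #T := by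
  classical
  rw [Pr_eq, card_filter_forall_mem_eq, ← card_add_card_compl T]
  push_cast
  rw [pow_add, div_mul_cancel_right₀ (by positivity), one_div_pow, one_div]

lemma Pr_le_sum_of_cover {ι : Type*} (P : Finset ι) (B : ι → Orient n → Prop)
    (E : Orient n → Prop) (hE : ∀ ω, E ω → ∃ i ∈ P, B i ω) :
    Pr n E ≤ ∑ i ∈ P, Pr n (B i) := by
  classical
  simp only [Pr_eq, ← sum_div]
  gcongr
  calc (#{ω | E ω} : ℝ) ≤ #(P.biUnion fun i => {ω | B i ω}) := by
        gcongr
        intro ω hω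
        obtain ⟨i, hi, hB⟩ := hE ω (mem_filter.1 hω).2
        exact mem_biUnion.2 ⟨i, hi, mem_filter.2 ⟨mem_univ _, hB⟩⟩
    _ ≤ ∑ i ∈ P, (#{ω | B i ω} : ℝ) := by exact_mod_cast card_biUnion_le

lemma dir_iff_of_lt (ω : Orient n) {i j : Fin n} (h : i < j) :
    dir ω i j ↔ ω ⟨(i, j), h⟩ = true := by
  simp [dir, h, h.not_gt]

lemma dir_iff_of_gt (ω : Orient n) {i j : Fin n} (h : j < i) :
    dir ω i j ↔ ω ⟨(j, i), h⟩ = false := by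
  simp [dir, h, h.not_gt]

def OutClosed (ω : Orient n) (S : Finset (Fin n)) : Prop :=
  ∀ u ∈ S, ∀ w, dir ω u w → w ∈ S

def crossEdges (S : Finset (Fin n)) : Finset (Edge n) :=
  {e | ¬(e.1.1 ∈ S ↔ e.1.2 ∈ S)}

@[simp]
lemma mem_crossEdges {S : Finset (Fin n)} {e : Edge n} :
    e ∈ crossEdges S ↔ ¬(e.1.1 ∈ S ↔ e.1.2 ∈ S) := by
  simp [crossEdges]

lemma card_crossEdges (S : Finset (Fin n)) : #(crossEdges S) = #S * #Sᶜ := by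
  rw [← card_product]
  refine card_nbij (fun e => if e.1.1 ∈ S then e.1 else e.1.swap) ?_ ?_ ?_
  · rintro ⟨⟨i, j⟩, h⟩ he
    rw [mem_coe, mem_crossEdges] at he
    by_cases hi : i ∈ S <;> simp_all
  · rintro ⟨⟨i, j⟩, h⟩ he ⟨⟨i', j'⟩, h'⟩ he' hij
    rw [mem_coe, mem_crossEdges] at he he'
    by_cases hi : i ∈ S <;> by_cases hi' : i' ∈ S <;> simp_all <;> grind
  · rintro ⟨u, w⟩ huw
    rw [mem_coe, mem_product, mem_compl] at huw
    have hne : u ≠ w := by rintro rfl; exact huw.2 huw.1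
    rcases hne.lt_or_gt with h | h
    · exact ⟨⟨(u, w), h⟩, by simp [huw.1, huw.2]⟩
    · exact ⟨⟨(w, u), h⟩, by simp [huw.1, huw.2]⟩

/-- A crossing edge `(i, j)`, `i < j`, of an out-closed `S` points into `S`, so it is oriented
forwards (`true`) exactly when `i ∉ S`. -/
lemma outClosed_iff (ω : Orient n) (S : Finset (Fin n)) :
    OutClosed ω S ↔ ∀ e ∈ crossEdges S, ω e = decide (e.1.1 ∉ S) := by
  constructor
  · rintro hS ⟨⟨i, j⟩, h⟩ he
    rw [mem_crossEdges] at he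
    by_cases hi : i ∈ S
    · have := mt (hS i hi j) (by tauto)
      rw [dir_iff_of_lt ω h] at this
      simpa [hi] using this
    · have := mt (hS j (by tauto) i) hi
      rw [dir_iff_of_gt ω h] at this
      simpa [hi] using this
  · intro hS u hu w hd
    by_contra hw
    rcases lt_trichotomy u w with h | rfl | h
    · have := hS ⟨(u, w), h⟩ (by simp [hu, hw])
      simp [hu, (dir_iff_of_lt ω h).1 hd] at this
    · exact hw hu
    · have := hS ⟨(w, u), h⟩ (by simp [hu, hw])
      simp [hw, (dir_iff_of_gt ω h).1 hd] at this

lemma Pr_outClosed (S : Finset (Fin n)) :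
    Pr n (OutClosed · S) = (1 / 2) ^ (#S * (n - #S)) := by
  simp_rw [outClosed_iff]
  rw [Pr_forall_mem_eq, card_crossEdges, card_compl, Fintype.card_fin]

lemma exists_outClosed_of_not_reaches {ω : Orient n} {a s : Fin n} (h : ¬reaches ω a s) :
    ∃ S ∈ (univ \ {a, s}).powerset, OutClosed ω (insert a S) := by
  classical
  refine ⟨{v ∈ univ \ {a, s} | reaches ω a v}, mem_powerset.2 (filter_subset _ _), ?_⟩
  intro u hu w hd
  have haw : reaches ω a w := by
    rcases mem_insert.1 hu with rfl | hu
    · exact .single hd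
    · exact .tail (mem_filter.1 hu).2 hd
  by_cases hwa : w = a
  · exact hwa ▸ mem_insert_self _ _
  · have hws : w ≠ s := by rintro rfl; exact h haw
    simp [hwa, hws, haw]

lemma Pr_not_reaches_le {m : ℕ} {a s : Fin (m + 2)} (has : a ≠ s) :
    Pr (m + 2) (fun ω => ¬reaches ω a s) ≤
      (1 / 2) ^ (m + 1) * ∑ j ∈ range (m + 1), (m.choose j : ℝ) * (1 / 2) ^ (j * (m - j)) := by
  classical
  set V : Finset (Fin (m + 2)) := univ \ {a, s}
  have hV : #V = m := by
    rw [card_sdiff_of_subset (subset_univ _), card_univ, Fintype.card_fin, card_pair has]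
    rfl
  have exponent : ∀ j ≤ m, (j + 1) * (m + 2 - (j + 1)) = m + 1 + j * (m - j) := by
    intro j hj
    obtain ⟨t, rfl⟩ := Nat.exists_eq_add_of_le hj
    rw [show j + t + 2 - (j + 1) = t + 1 by omega, Nat.add_sub_cancel_left]
    ring
  calc Pr (m + 2) (fun ω => ¬reaches ω a s)
      ≤ ∑ S ∈ V.powerset, Pr (m + 2) (OutClosed · (insert a S)) :=
        Pr_le_sum_of_cover _ _ _ fun _ => exists_outClosed_of_not_reaches
    _ = (1 / 2) ^ (m + 1) * ∑ S ∈ V.powerset, (1 / 2 : ℝ) ^ (#S * (m - #S)) := by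
        rw [mul_sum]
        refine sum_congr rfl fun S hS => ?_
        have haS : a ∉ S := fun h => by simpa [V] using mem_powerset.1 hS h
        have hSm : #S ≤ m := (card_le_card (mem_powerset.1 hS)).trans_eq hV
        rw [Pr_outClosed, card_insert_of_notMem haS, ← pow_add, exponent _ hSm]
    _ = (1 / 2) ^ (m + 1) * ∑ j ∈ range (m + 1), (m.choose j : ℝ) * (1 / 2) ^ (j * (m - j)) := by
        rw [sum_powerset_apply_card (fun j => (1 / 2 : ℝ) ^ (j * (m - j))), hV]
        simp only [nsmul_eq_mul]

end Orient

theorem no_path_prob_upper_general (n : ℕ) (a s : Fin n) (has : a ≠ s) :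
    Pr n (fun ω => ¬ reaches ω a s) ≤
      ((1 : ℝ) / 2) ^ (n - 2) * (1 + 3.2 * (7 / 8) ^ (n - 1)) := by
  obtain ⟨m, rfl⟩ : ∃ m, n = m + 2 := ⟨n - 2, by have := Fin.val_ne_of_ne has; omega⟩
  calc Pr (m + 2) (fun ω => ¬reaches ω a s)
      ≤ (1 / 2) ^ (m + 1) * ∑ j ∈ range (m + 1), (m.choose j : ℝ) * (1 / 2) ^ (j * (m - j)) :=
        Orient.Pr_not_reaches_le has
    _ ≤ (1 / 2) ^ (m + 1) * (2 + 5.6 * (7 / 8) ^ m) := by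
        gcongr
        exact sum_choose_mul_half_pow_le m
    _ = (1 / 2) ^ (m + 2 - 2) * (1 + 3.2 * (7 / 8) ^ (m + 2 - 1)) := by
        simp only [Nat.add_sub_cancel, show m + 2 - 1 = m + 1 by omega, pow_succ]
        ring

theorem no_path_prob_upper (n : ℕ) (hn : 2 ≤ n) (a s : Fin n) (has : a ≠ s) :
    Pr n (fun ω => ¬ reaches ω a s) ≤
      ((1 : ℝ) / 2) ^ (n - 2) * (1 + 3.2 * (7 / 8) ^ (n - 1)) :=
  no_path_prob_upper_general n a s has
end

section
/- In a uniformly random orientation of the graph on vertex set {a, s, b, v} with edges {a,s}, {s,b}, {a,v}, {s,v}, {b,v} (i.e., K_4 minus the edge {a,b}), the events C = {there is a directed path from a to s} and D = {there is a directed path from s to b} satisfy P(C) = P(D) = 21/32, P(C ∩ D) = 7/16, and hence P(C∩D) − P(C)P(D) = 7/1024 > 0. -/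
/-- An orientation of the graph `G`: each edge `{i,j}` with `i < j` gets a direction;
`ω ⟨(i,j),h⟩ = true` means the edge is oriented `i → j`. Under the uniform probability
`PrG` every edge is independently oriented each way with probability `1/2`. -/
abbrev GOrient {n : ℕ} (G : SimpleGraph (Fin n)) [DecidableRel G.Adj] : Type :=
  {p : Fin n × Fin n // p.1 < p.2 ∧ G.Adj p.1 p.2} → Bool

/-- The edge between `i` and `j` exists and is oriented from `i` to `j`. -/
def gdir {n : ℕ} {G : SimpleGraph (Fin n)} [DecidableRel G.Adj] (ω : GOrient G)
    (i j : Fin n) : Prop :=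
  (∃ h : i < j ∧ G.Adj i j, ω ⟨(i, j), h⟩ = true) ∨
  (∃ h : j < i ∧ G.Adj j i, ω ⟨(j, i), h⟩ = false)

/-- There is a directed path from `a` to `s` in the orientation `ω`. -/
def greaches {n : ℕ} {G : SimpleGraph (Fin n)} [DecidableRel G.Adj] (ω : GOrient G)
    (a s : Fin n) : Prop :=
  Relation.TransGen (gdir ω) a s

/-- The probability of the event `E` for a uniformly random orientation of `G`. -/
noncomputable def PrG {n : ℕ} (G : SimpleGraph (Fin n)) [DecidableRel G.Adj]
    (E : GOrient G → Prop) : ℝ :=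
  haveI := Classical.decPred E
  ((Finset.univ.filter E).card : ℝ) / (Fintype.card (GOrient G) : ℝ)

/-- `K₄` minus the edge `{a, b}`, with `a = 0`, `s = 1`, `b = 2`, `v = 3`:
the edges are `{a,s}, {s,b}, {a,v}, {s,v}, {b,v}`. -/
def G14 : SimpleGraph (Fin 4) where
  Adj i j := i ≠ j ∧ ¬((i = 0 ∧ j = 2) ∨ (i = 2 ∧ j = 0))
  symm := by constructor; intro i j h; exact ⟨h.1.symm, by tauto⟩
  loopless := by constructor; intro i h; exact h.1 rfl

instance : DecidableRel G14.Adj := fun i j =>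
  decidable_of_iff (i ≠ j ∧ ¬((i = 0 ∧ j = 2) ∨ (i = 2 ∧ j = 0))) Iff.rfl

/-!
A path from `a` to `s` is `a s`, `a v s` or `a v b s`, so `P(C) = 1/2 + 1/4 · (1/2 + 1/8) = 21/32`;
reversing every edge and swapping `a` with `b` turns `C` into `D`. Formally all 32 orientations are
enumerated. Reachability from `a` in a finite digraph is decidable: the set of vertices reached
from `a` is saturated under the edge relation, and since it grows at every round until it is
stable, it is stable after `|V|` rounds.
-/

namespace Relation

variable {α : Type*} [Fintype α] [DecidableEq α] (r : α → α → Prop) [DecidableRel r]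

def addSuccessors (S : Finset α) : Finset α :=
  S ∪ Finset.univ.filter fun b => ∃ a ∈ S, r a b

lemma subset_addSuccessors (S : Finset α) : S ⊆ addSuccessors r S :=
  Finset.subset_union_left

lemma monotone_iterate_addSuccessors (S : Finset α) :
    Monotone fun k => (addSuccessors r)^[k] S :=
  monotone_nat_of_le_succ fun k => by
    simpa only [Function.iterate_succ_apply'] using subset_addSuccessors r _

lemma addSuccessors_iterate_card (S : Finset α) :
    addSuccessors r ((addSuccessors r)^[Fintype.card α] S) =
      (addSuccessors r)^[Fintype.card α] S := by
  set T : ℕ → Finset α := fun k => (addSuccessors r)^[k] S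
  have hsucc (k : ℕ) : T (k + 1) = addSuccessors r (T k) := Function.iterate_succ_apply' _ _ _
  have hmono : Monotone T := monotone_iterate_addSuccessors r S
  have heq_of_card (k : ℕ) (h : (T k).card = (T (k + 1)).card) : T (k + 1) = T k :=
    (Finset.eq_of_subset_of_card_le (hmono k.le_succ) h.ge).symm
  have hcard : (T (Fintype.card α + 1)).card = (T (Fintype.card α)).card :=
    Nat.stabilises_of_monotone (fun _ _ h => Finset.card_le_card (hmono h))
      (fun _ => Finset.card_le_univ _)
      (fun k h => by rwa [hsucc (k + 1), heq_of_card k h, ← hsucc]) (Nat.le_succ _)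
  rw [← hsucc, heq_of_card _ hcard.symm]

theorem transGen_iff_mem_iterate_addSuccessors (a b : α) :
    TransGen r a b ↔
      b ∈ (addSuccessors r)^[Fintype.card α] (Finset.univ.filter (r a)) := by
  constructor
  · intro h
    induction h with
    | single hab =>
      exact monotone_iterate_addSuccessors r _ (Nat.zero_le _) (by simpa using hab)
    | tail _ hcd ih =>
      rw [← addSuccessors_iterate_card]
      exact Finset.mem_union_right _ (Finset.mem_filter.2 ⟨Finset.mem_univ _, _, ih, hcd⟩)
  · suffices h : ∀ k, ∀ b ∈ (addSuccessors r)^[k] (Finset.univ.filter (r a)), TransGen r a b from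
      h _ b
    intro k
    induction k with
    | zero => exact fun b hb => TransGen.single (Finset.mem_filter.1 hb).2
    | succ k ih =>
      intro b hb
      rw [Function.iterate_succ_apply'] at hb
      rcases Finset.mem_union.1 hb with hb | hb
      · exact ih b hb
      · obtain ⟨-, c, hc, hcb⟩ := Finset.mem_filter.1 hb
        exact (ih c hc).tail hcb

instance decidableRelTransGen : DecidableRel (TransGen r) := fun a b =>
  decidable_of_iff' _ (transGen_iff_mem_iterate_addSuccessors r a b)

end Relation

section

variable {n : ℕ} {G : SimpleGraph (Fin n)} [DecidableRel G.Adj]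

instance (ω : GOrient G) : DecidableRel (gdir ω) := fun _ _ => by
  unfold gdir; infer_instance

instance (ω : GOrient G) : DecidableRel (greaches ω) :=
  Relation.decidableRelTransGen (gdir ω)

lemma PrG_eq_card_div (E : GOrient G → Prop) [DecidablePred E] :
    PrG G E = ((Finset.univ.filter E).card : ℝ) / (Fintype.card (GOrient G) : ℝ) := by
  unfold PrG
  rw [Finset.filter_congr_decidable]

end

lemma card_GOrient_G14 : Fintype.card (GOrient G14) = 32 := by decide

lemma PrG_G14_reaches_zero_one : PrG G14 (fun ω => greaches ω 0 1) = 21 / 32 := by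
  rw [PrG_eq_card_div, card_GOrient_G14,
    show (Finset.univ.filter fun ω : GOrient G14 => greaches ω 0 1).card = 21 by decide]
  norm_num

lemma PrG_G14_reaches_one_two : PrG G14 (fun ω => greaches ω 1 2) = 21 / 32 := by
  rw [PrG_eq_card_div, card_GOrient_G14,
    show (Finset.univ.filter fun ω : GOrient G14 => greaches ω 1 2).card = 21 by decide]
  norm_num

lemma PrG_G14_reaches_zero_one_and_one_two :
    PrG G14 (fun ω => greaches ω 0 1 ∧ greaches ω 1 2) = 7 / 16 := by
  rw [PrG_eq_card_div, card_GOrient_G14,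
    show (Finset.univ.filter fun ω : GOrient G14 => greaches ω 0 1 ∧ greaches ω 1 2).card = 14 by
      decide]
  norm_num

theorem K4_minus_ab_positive_correlation :
    PrG G14 (fun ω => greaches ω 0 1) = 21 / 32 ∧
    PrG G14 (fun ω => greaches ω 1 2) = 21 / 32 ∧
    PrG G14 (fun ω => greaches ω 0 1 ∧ greaches ω 1 2) = 7 / 16 ∧
    PrG G14 (fun ω => greaches ω 0 1 ∧ greaches ω 1 2) -
        PrG G14 (fun ω => greaches ω 0 1) * PrG G14 (fun ω => greaches ω 1 2) =
      7 / 1024 := by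
  have hC := PrG_G14_reaches_zero_one
  have hD := PrG_G14_reaches_one_two
  have hCD := PrG_G14_reaches_zero_one_and_one_two
  refine ⟨hC, hD, hCD, ?_⟩
  rw [hC, hD, hCD]
  norm_num
end

section
/- Let n ≥ 3 and let c, d ≥ 1 with c + d ≤ n − 1. In a uniformly random orientation of the cycle C_n, with vertices a, s, b at pairwise distances c (a to s), d (s to b), and n−c−d (b to a) along the cycle, the events C = {directed path from a to s} and D = {directed path from s to b} satisfy P(C) = (1/2)^c + (1/2)^(n-c) − (1/2)^n, P(D) = (1/2)^d + (1/2)^(n-d) − (1/2)^n, and P(C∩D) = (1/2)^(c+d) + (1/2)^n. -/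
/-- The cycle graph `C_n` on `Fin n` (for `n ≥ 3`): `i` and `j` are adjacent iff they are
distinct and consecutive modulo `n`. -/
def cycleG (n : ℕ) : SimpleGraph (Fin n) where
  Adj i j := i ≠ j ∧ (j.val = (i.val + 1) % n ∨ i.val = (j.val + 1) % n)
  symm := by constructor; intro i j h; exact ⟨h.1.symm, h.2.symm⟩
  loopless := by constructor; intro i h; exact h.1 rfl

instance (n : ℕ) : DecidableRel (cycleG n).Adj := fun i j =>
  decidable_of_iff (i ≠ j ∧ (j.val = (i.val + 1) % n ∨ i.val = (j.val + 1) % n)) Iff.rfl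


/-!
Edge `k` of `C_n` joins `k` and `k + 1`, and an orientation is the same as a fair bit for each
edge. Walking from `a` one can only move along the cycle, so `s` is reachable iff every edge of
the arc from `a` forward to `s` points forward, or every edge of the complementary arc points
backward: otherwise a backward edge on the first arc and a forward edge on the second one trap
the walk between them. For an arc of length `d` the two alternatives have `2 ^ (n - d)` and
`2 ^ d` outcomes and share exactly one. For two consecutive arcs of lengths `c` and `d`, the only
consistent choices are "all `c + d` edges forward" and "the whole cycle backward".
-/

open Finset Relation

section Counting

variable {α : Type*} [Fintype α] [DecidableEq α]

theorem card_filter_forall_mem_eq_s16 (S : Finset α) (g : α → Bool) :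
    #{f : α → Bool | ∀ k ∈ S, f k = g k} = 2 ^ #Sᶜ := by
  have hpi : ({f : α → Bool | ∀ k ∈ S, f k = g k} : Finset _) =
      Fintype.piFinset fun k => if k ∈ S then {g k} else univ := by
    ext f
    simp only [mem_filter, mem_univ, true_and, Fintype.mem_piFinset]
    refine forall_congr' fun k => ?_
    split_ifs with hk <;> simp [hk]
  rw [hpi, Fintype.card_piFinset]
  simp [apply_ite, prod_ite, filter_not, ← compl_eq_univ_sdiff]

theorem card_filter_forall_mem_eq_or_forall_notMem_ne (S : Finset α) (g : α → Bool) :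
    #{f : α → Bool | (∀ k ∈ S, f k = g k) ∨ ∀ k ∉ S, f k ≠ g k} + 1 = 2 ^ #Sᶜ + 2 ^ #S := by
  set A := univ.filter fun f : α → Bool => ∀ k ∈ S, f k = g k
  set B := univ.filter fun f : α → Bool => ∀ k ∈ Sᶜ, f k = !g k
  have hinter : #(A ∩ B) = 1 := by
    rw [card_eq_one]
    refine ⟨fun k => if k ∈ S then g k else !g k, ?_⟩
    ext f
    simp only [A, B, mem_inter, mem_filter, mem_univ, true_and, mem_compl, mem_singleton,
      funext_iff]
    refine ⟨fun ⟨h₁, h₂⟩ k => ?_, fun h => ⟨fun k hk => ?_, fun k hk => ?_⟩⟩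
    · split_ifs with hk
      exacts [h₁ k hk, h₂ k hk]
    all_goals simp [h k, hk]
  have hunion := card_union_add_card_inter A B
  rw [← filter_or, hinter, card_filter_forall_mem_eq_s16, card_filter_forall_mem_eq_s16,
    compl_compl] at hunion
  simpa only [mem_compl, Bool.eq_not_iff] using hunion

theorem card_filter_forall_mem_eq_or_forall_ne {S : Finset α} (hS : S.Nonempty) (g : α → Bool) :
    #{f : α → Bool | (∀ k ∈ S, f k = g k) ∨ ∀ k, f k ≠ g k} = 2 ^ #Sᶜ + 1 := by
  set A := univ.filter fun f : α → Bool => ∀ k ∈ S, f k = g k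
  set B := univ.filter fun f : α → Bool => ∀ k ∈ univ, f k = !g k
  have hdisj : Disjoint A B := by
    obtain ⟨k, hk⟩ := hS
    rw [disjoint_filter]
    intro f _ h₁ h₂
    simpa [h₁ k hk] using h₂ k (mem_univ k)
  have hunion := card_union_of_disjoint hdisj
  rw [← filter_or, card_filter_forall_mem_eq_s16, card_filter_forall_mem_eq_s16] at hunion
  simpa only [mem_univ, true_implies, compl_univ, card_empty, pow_zero, Bool.eq_not_iff]
    using hunion

end Counting

theorem forall_mem_or_forall_notMem_and_iff {α : Type*} [DecidableEq α] {A B : Finset α}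
    {P : α → Prop} (hAB : Disjoint A B) (hA : A.Nonempty) (hB : B.Nonempty) :
    (((∀ k ∈ A, P k) ∨ ∀ k ∉ A, ¬ P k) ∧ ((∀ k ∈ B, P k) ∨ ∀ k ∉ B, ¬ P k)) ↔
      (∀ k ∈ A ∪ B, P k) ∨ ∀ k, ¬ P k := by
  obtain ⟨x, hx⟩ := hA
  obtain ⟨y, hy⟩ := hB
  constructor
  · rintro ⟨hA | hA, hB | hB⟩
    · exact .inl fun k hk => (mem_union.1 hk).elim (hA k) (hB k)
    · exact absurd (hA x hx) (hB x (disjoint_left.1 hAB hx))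
    · exact absurd (hB y hy) (hA y (disjoint_right.1 hAB hy))
    · exact .inr fun k => if hk : k ∈ A then hB k (disjoint_left.1 hAB hk) else hA k hk
  · rintro (h | h)
    · exact ⟨.inl fun k hk => h k (mem_union_left _ hk),
        .inl fun k hk => h k (mem_union_right _ hk)⟩
    · exact ⟨.inr fun k _ => h k, .inr fun k _ => h k⟩

theorem div_two_pow_eq_one_half_pow {m n : ℕ} (h : m ≤ n) :
    (2 : ℝ) ^ m / 2 ^ n = (1 / 2) ^ (n - m) := by
  rw [← Nat.sub_add_cancel h, pow_add, Nat.add_sub_cancel, one_div_pow,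
    div_mul_cancel_right₀ (by positivity), one_div]

theorem div_two_pow_eq_of_add_one_eq {N d n : ℕ} (hd : d ≤ n)
    (h : N + 1 = 2 ^ (n - d) + 2 ^ d) :
    (N : ℝ) / 2 ^ n = (1 / 2) ^ d + (1 / 2) ^ (n - d) - (1 / 2) ^ n := by
  rw [eq_sub_of_add_eq (by exact_mod_cast h : (N : ℝ) + 1 = 2 ^ (n - d) + 2 ^ d), sub_div,
    add_div, div_two_pow_eq_one_half_pow (Nat.sub_le n d), div_two_pow_eq_one_half_pow hd,
    Nat.sub_sub_self hd, ← one_div_pow]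

theorem div_two_pow_eq_of_eq_add_one {N m n : ℕ} (hm : m ≤ n) (h : N = 2 ^ (n - m) + 1) :
    (N : ℝ) / 2 ^ n = (1 / 2) ^ m + (1 / 2) ^ n := by
  rw [h, Nat.cast_add, Nat.cast_pow, Nat.cast_ofNat, Nat.cast_one, add_div,
    div_two_pow_eq_one_half_pow (Nat.sub_le n m), Nat.sub_sub_self hm, one_div_pow, one_div_pow]

theorem PrG_eq_card_div_s16 {n : ℕ} {ι : Type*} [Fintype ι] [DecidableEq ι] {G : SimpleGraph (Fin n)}
    [DecidableRel G.Adj] (e : GOrient G ≃ (ι → Bool)) {E : GOrient G → Prop}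
    (E' : (ι → Bool) → Prop) [DecidablePred E'] (hE : ∀ f, E (e.symm f) ↔ E' f) :
    PrG G E = #{f | E' f} / 2 ^ Fintype.card ι := by
  classical
  unfold PrG
  rw [Fintype.card_congr e, card_equiv e (t := {f | E' f}) (by simp [← hE])]
  simp

section Orientation

variable {n : ℕ} {G : SimpleGraph (Fin n)} [DecidableRel G.Adj] {ω : GOrient G} {i j : Fin n}

theorem gdir.adj (h : gdir ω i j) : G.Adj i j := by
  rcases h with ⟨h, -⟩ | ⟨h, -⟩
  exacts [h.2, h.2.symm]

theorem gdir_iff_of_lt (hij : i < j) (hadj : G.Adj i j) :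
    gdir ω i j ↔ ω ⟨(i, j), hij, hadj⟩ = true := by
  simp [gdir, hij, hij.not_gt, hadj]

theorem gdir_iff_of_gt (hji : j < i) (hadj : G.Adj j i) :
    gdir ω i j ↔ ω ⟨(j, i), hji, hadj⟩ = false := by
  simp [gdir, hji, hji.not_gt, hadj]

theorem gdir_iff_not_gdir (h : G.Adj i j) : gdir ω i j ↔ ¬ gdir ω j i := by
  rcases lt_or_gt_of_ne h.ne with hij | hji
  · simp [gdir_iff_of_lt hij h, gdir_iff_of_gt hij h]
  · simp [gdir_iff_of_gt hji h.symm, gdir_iff_of_lt hji h.symm]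

end Orientation

section FinArith

variable {n : ℕ} [NeZero n]

theorem Fin.val_add_one_of_two_le (hn : 2 ≤ n) (y : Fin n) : (y + 1).val = (y.val + 1) % n := by
  rw [Fin.val_add, Fin.val_one', Nat.mod_eq_of_lt hn]

theorem Fin.val_add_one_eq_ite (hn : 2 ≤ n) (y : Fin n) :
    (y + 1).val = if y.val + 1 = n then 0 else y.val + 1 := by
  rw [Fin.val_add_one_of_two_le hn]
  split_ifs with h
  · rw [h, Nat.mod_self]
  · exact Nat.mod_eq_of_lt (by omega)

theorem Fin.val_add_one_sub (hn : 2 ≤ n) (v a : Fin n) :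
    (v + 1 - a).val = if (v - a).val + 1 = n then 0 else (v - a).val + 1 := by
  rw [add_sub_right_comm, Fin.val_add_one_eq_ite hn]

theorem Fin.reflTransGen_of_add_one (hn : 2 ≤ n) {r : Fin n → Fin n → Prop} {x v : Fin n}
    {t : ℕ} (h : ∀ u, (u - x).val < t → r u (u + 1)) (hv : (v - x).val ≤ t) :
    ReflTransGen r x v := by
  obtain ⟨m, hm⟩ : ∃ m, (v - x).val = m := ⟨_, rfl⟩
  induction m generalizing v with
  | zero => rw [sub_eq_zero.1 (Fin.ext hm)]
  | succ m ih =>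
    have hu : (v - 1 - x).val = m := by
      have hsucc := Fin.val_add_one_sub hn (v - 1) x
      rw [sub_add_cancel] at hsucc
      split_ifs at hsucc <;> omega
    simpa using (ih (by omega) hu).tail (h (v - 1) (by omega))

end FinArith

namespace cycleG

section Arc

variable {n : ℕ}

/-- The edges met when walking forward from `a` to `s`, edge `k` being the one from `k` to
`k + 1`. -/
def arc (a s : Fin n) : Finset (Fin n) := {k | (k - a).val < (s - a).val}

theorem mem_arc {a s k : Fin n} : k ∈ arc a s ↔ (k - a).val < (s - a).val := by
  simp [arc]

theorem notMem_arc_iff {a s k : Fin n} (h : a ≠ s) :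
    k ∉ arc a s ↔ (k - s).val < (a - s).val := by
  rw [mem_arc]
  fin_omega

theorem card_arc [NeZero n] (a s : Fin n) : #(arc a s) = (s - a).val := by
  rw [arc, card_equiv (Equiv.subRight a) (t := {j : Fin n | j.val < (s - a).val}) (by simp),
    Fin.card_filter_val_lt, min_eq_right (s - a).isLt.le]

theorem disjoint_arc_arc [NeZero n] {a s t : Fin n} (h : (s - a).val + (t - s).val ≤ n) :
    Disjoint (arc a s) (arc s t) := by
  rw [disjoint_left]
  intro k hk₁ hk₂
  rw [mem_arc] at hk₁ hk₂
  rw [← sub_sub_sub_cancel_right k s a, Fin.coe_sub_iff_lt.2 hk₁] at hk₂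
  omega

end Arc

variable {n : ℕ} [NeZero n]

theorem adj_iff (hn : 2 ≤ n) {i j : Fin n} : (cycleG n).Adj i j ↔ j = i + 1 ∨ i = j + 1 := by
  have hne (k : Fin n) : k ≠ k + 1 := by
    rw [ne_eq, Fin.ext_iff, Fin.val_add_one_eq_ite hn]
    split_ifs <;> omega
  have hsucc (k l : Fin n) : l.val = (k.val + 1) % n ↔ l = k + 1 := by
    rw [Fin.ext_iff, Fin.val_add_one_of_two_le hn]
  change i ≠ j ∧ _ ↔ _
  rw [hsucc, hsucc]
  refine ⟨And.right, ?_⟩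
  rintro (rfl | rfl)
  exacts [⟨hne i, Or.inl rfl⟩, ⟨(hne j).symm, Or.inr rfl⟩]

theorem adj_add_one (hn : 2 ≤ n) (k : Fin n) : (cycleG n).Adj k (k + 1) :=
  (adj_iff hn).2 (Or.inl rfl)

def forward (ω : GOrient (cycleG n)) (k : Fin n) : Prop := gdir ω k (k + 1)

theorem gdir_iff (hn : 2 ≤ n) {ω : GOrient (cycleG n)} {i j : Fin n} :
    gdir ω i j ↔ (j = i + 1 ∧ forward ω i) ∨ (i = j + 1 ∧ ¬ forward ω j) := by
  constructor
  · intro h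
    rcases (adj_iff hn).1 h.adj with rfl | rfl
    · exact Or.inl ⟨rfl, h⟩
    · exact Or.inr ⟨rfl, (gdir_iff_not_gdir h.adj).1 h⟩
  · rintro (⟨rfl, h⟩ | ⟨rfl, h⟩)
    · exact h
    · exact (gdir_iff_not_gdir (adj_add_one hn j).symm).2 h

section Reach

variable {ω : GOrient (cycleG n)} {a s : Fin n}

theorem greaches_of_forall_mem_arc (hn : 2 ≤ n) (has : a ≠ s)
    (h : ∀ k ∈ arc a s, forward ω k) : greaches ω a s :=
  (reflTransGen_iff_eq_or_transGen.1 <| Fin.reflTransGen_of_add_one hn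
    (fun u hu => h u (mem_arc.2 hu)) le_rfl).resolve_left has.symm

theorem greaches_of_forall_notMem_arc (hn : 2 ≤ n) (has : a ≠ s)
    (h : ∀ k ∉ arc a s, ¬ forward ω k) : greaches ω a s := by
  have hback : ReflTransGen (Function.swap (gdir ω)) s a :=
    Fin.reflTransGen_of_add_one hn (t := (a - s).val)
      (fun u hu => (gdir_iff hn).2 (Or.inr ⟨rfl, h u ((notMem_arc_iff has).2 hu)⟩)) le_rfl
  exact (reflTransGen_iff_eq_or_transGen.1 (reflTransGen_swap.1 hback)).resolve_left has.symm

theorem forall_mem_arc_or_forall_notMem_arc_of_greaches (hn : 2 ≤ n) (h : greaches ω a s) :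
    (∀ k ∈ arc a s, forward ω k) ∨ ∀ k ∉ arc a s, ¬ forward ω k := by
  by_contra! hcon
  obtain ⟨⟨k₁, hk₁, hback⟩, ⟨k₂, hk₂, hfwd⟩⟩ := hcon
  rw [mem_arc] at hk₁ hk₂
  -- Going around from `a`, a walk can cross neither the backward edge `k₁`
  -- nor the forward edge `k₂`, so it stays in the arc from `k₂ + 1` to `k₁`.
  let T : Fin n → Prop := fun v => (v - a).val ≤ (k₁ - a).val ∨ (k₂ - a).val < (v - a).val
  have hT {v w : Fin n} (hvw : gdir ω v w) : ¬ T w → ¬ T v := by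
    rw [not_imp_not]
    rcases (gdir_iff hn).1 hvw with ⟨rfl, hv⟩ | ⟨rfl, hw⟩
    · have hne : (v - a).val ≠ (k₁ - a).val :=
        Fin.val_injective.ne (sub_left_injective.ne fun e => hback (e ▸ hv))
      have hsucc := Fin.val_add_one_sub hn v a
      simp only [T]
      split_ifs at hsucc <;> omega
    · have hne : (w - a).val ≠ (k₂ - a).val :=
        Fin.val_injective.ne (sub_left_injective.ne fun e => hw (e ▸ hfwd))
      have hsucc := Fin.val_add_one_sub hn w a
      have hlt := (w - a).isLt
      simp only [T]
      split_ifs at hsucc <;> omega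
  have h' : TransGen (gdir ω) a s := h
  exact h'.closed' (P := fun v => ¬ T v) hT (by simp only [T]; omega) (by simp [T])

theorem greaches_iff (hn : 2 ≤ n) (has : a ≠ s) :
    greaches ω a s ↔ (∀ k ∈ arc a s, forward ω k) ∨ ∀ k ∉ arc a s, ¬ forward ω k :=
  ⟨forall_mem_arc_or_forall_notMem_arc_of_greaches hn, fun h =>
    h.elim (greaches_of_forall_mem_arc hn has) (greaches_of_forall_notMem_arc hn has)⟩

end Reach

def edge (hn : 2 ≤ n) (k : Fin n) : {p : Fin n × Fin n // p.1 < p.2 ∧ (cycleG n).Adj p.1 p.2} :=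
  if h : k < k + 1 then ⟨(k, k + 1), h, adj_add_one hn k⟩
  else ⟨(k + 1, k), lt_of_le_of_ne (not_lt.1 h) (adj_add_one hn k).ne.symm,
    (adj_add_one hn k).symm⟩

-- Only the wrap-around edge `n - 1 — 0` is stored with its endpoints in the opposite order.
theorem forward_iff (hn : 2 ≤ n) (ω : GOrient (cycleG n)) (k : Fin n) :
    forward ω k ↔ ω (edge hn k) = decide (k < k + 1) := by
  have hadj := adj_add_one hn k
  unfold forward edge
  split_ifs with h
  · simpa [h] using gdir_iff_of_lt (ω := ω) h hadj
  · simpa [h] using gdir_iff_of_gt (ω := ω) (lt_of_le_of_ne (not_lt.1 h) hadj.ne.symm) hadj.symm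

theorem edge_bijective (hn : 3 ≤ n) : Function.Bijective (edge (n := n) (by omega)) := by
  have hval (k : Fin n) :
      (edge (by omega) k).1 = (k, k + 1) ∨ (edge (by omega) k).1 = (k + 1, k) := by
    unfold edge
    split_ifs <;> simp
  have htwo (k : Fin n) : k + 1 + 1 ≠ k := by
    rw [ne_eq, Fin.ext_iff, Fin.val_add_one_eq_ite (by omega), Fin.val_add_one_eq_ite (by omega)]
    split_ifs <;> omega
  constructor
  · intro k l hkl
    have hkl := congrArg Subtype.val hkl
    rcases hval k with hk | hk <;> rcases hval l with hl | hl <;>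
      simp only [hk, hl, Prod.mk.injEq] at hkl
    · exact hkl.1
    · obtain ⟨rfl, h⟩ := hkl
      exact absurd h (htwo l)
    · obtain ⟨rfl, h⟩ := hkl
      exact absurd h.symm (htwo k)
    · exact hkl.2
  · rintro ⟨⟨i, j⟩, hij, hadj⟩
    dsimp only at hij hadj
    rcases (adj_iff (by omega)).1 hadj with rfl | rfl
    · exact ⟨i, by unfold edge; rw [dif_pos hij]⟩
    · exact ⟨j, by unfold edge; rw [dif_neg hij.not_gt]⟩

noncomputable def orientEquiv (hn : 3 ≤ n) : GOrient (cycleG n) ≃ (Fin n → Bool) :=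
  (Equiv.ofBijective _ (edge_bijective hn)).symm.arrowCongr (Equiv.refl Bool)

theorem forward_orientEquiv_symm_iff (hn : 3 ≤ n) (f : Fin n → Bool) (k : Fin n) :
    forward ((orientEquiv hn).symm f) k ↔ f k = decide (k < k + 1) := by
  rw [forward_iff (by omega)]
  simp [orientEquiv]

theorem greaches_orientEquiv_symm_iff (hn : 3 ≤ n) {a s : Fin n} (has : a ≠ s)
    (f : Fin n → Bool) :
    greaches ((orientEquiv hn).symm f) a s ↔
      (∀ k ∈ arc a s, f k = decide (k < k + 1)) ∨ ∀ k ∉ arc a s, f k ≠ decide (k < k + 1) := by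
  simp only [greaches_iff (by omega : 2 ≤ n) has, forward_orientEquiv_symm_iff]

theorem PrG_greaches (hn : 3 ≤ n) {a s : Fin n} (has : a ≠ s) :
    PrG (cycleG n) (fun ω => greaches ω a s) =
      (1 / 2 : ℝ) ^ (s - a).val + (1 / 2) ^ (n - (s - a).val) - (1 / 2) ^ n := by
  have hcount := card_filter_forall_mem_eq_or_forall_notMem_ne (arc a s)
    fun k => decide (k < k + 1)
  rw [card_compl, Fintype.card_fin, card_arc] at hcount
  rw [PrG_eq_card_div_s16 (orientEquiv hn) _ (greaches_orientEquiv_symm_iff hn has),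
    Fintype.card_fin]
  convert div_two_pow_eq_of_add_one_eq (s - a).isLt.le hcount

theorem PrG_greaches_and_greaches (hn : 3 ≤ n) {a s t : Fin n} (has : a ≠ s) (hst : s ≠ t)
    (hlen : (s - a).val + (t - s).val ≤ n) :
    PrG (cycleG n) (fun ω => greaches ω a s ∧ greaches ω s t) =
      (1 / 2 : ℝ) ^ ((s - a).val + (t - s).val) + (1 / 2) ^ n := by
  have hdisj := disjoint_arc_arc hlen
  have harc (x y : Fin n) (hxy : x ≠ y) : (arc x y).Nonempty := by
    rw [← card_pos, card_arc]
    exact Nat.pos_of_ne_zero fun h => hxy (sub_eq_zero.1 (Fin.ext h)).symm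
  have hcount := card_filter_forall_mem_eq_or_forall_ne
    ((harc a s has).mono (subset_union_left (s₂ := arc s t))) fun k => decide (k < k + 1)
  rw [card_compl, Fintype.card_fin, card_union_of_disjoint hdisj, card_arc, card_arc] at hcount
  rw [PrG_eq_card_div_s16 (orientEquiv hn) _ fun f => (and_congr
      (greaches_orientEquiv_symm_iff hn has f) (greaches_orientEquiv_symm_iff hn hst f)).trans
      (forall_mem_or_forall_notMem_and_iff hdisj (harc a s has) (harc s t hst)),
    Fintype.card_fin]
  convert div_two_pow_eq_of_eq_add_one hlen hcount

end cycleG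

theorem cycle_path_probabilities (n c d : ℕ) (hn : 3 ≤ n) (hc : 1 ≤ c) (hd : 1 ≤ d)
    (hcd : c + d ≤ n - 1) :
    PrG (cycleG n) (fun ω => greaches ω ⟨0, by omega⟩ ⟨c, by omega⟩) =
        (1 / 2 : ℝ) ^ c + (1 / 2) ^ (n - c) - (1 / 2) ^ n ∧
    PrG (cycleG n) (fun ω => greaches ω ⟨c, by omega⟩ ⟨c + d, by omega⟩) =
        (1 / 2 : ℝ) ^ d + (1 / 2) ^ (n - d) - (1 / 2) ^ n ∧
    PrG (cycleG n) (fun ω =>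
        greaches ω ⟨0, by omega⟩ ⟨c, by omega⟩ ∧ greaches ω ⟨c, by omega⟩ ⟨c + d, by omega⟩) =
      (1 / 2 : ℝ) ^ (c + d) + (1 / 2) ^ n := by
  have : NeZero n := ⟨by omega⟩
  have hac : (⟨0, by omega⟩ : Fin n) ≠ ⟨c, by omega⟩ :=
    Fin.ne_of_val_ne (show 0 ≠ c by omega)
  have hcs : (⟨c, by omega⟩ : Fin n) ≠ ⟨c + d, by omega⟩ :=
    Fin.ne_of_val_ne (show c ≠ c + d by omega)
  have hac' : ((⟨c, by omega⟩ : Fin n) - ⟨0, by omega⟩).val = c :=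
    Fin.sub_val_of_le (Nat.zero_le c)
  have hcs' : ((⟨c + d, by omega⟩ : Fin n) - ⟨c, by omega⟩).val = d :=
    (Fin.sub_val_of_le (Nat.le_add_right c d)).trans (Nat.add_sub_cancel_left ..)
  refine ⟨?_, ?_, ?_⟩
  · rw [cycleG.PrG_greaches hn hac, hac']
  · rw [cycleG.PrG_greaches hn hcs, hcs']
  · rw [cycleG.PrG_greaches_and_greaches hn hac hcs (by omega), hac', hcs']
end

section
/- For all integers n ≥ 3 and c, d ≥ 1 with c + d ≤ n − 1, the quantity (1/2)^(c+d) + (1/2)^n − ((1/2)^c + (1/2)^(n-c) − (1/2)^n)·((1/2)^d + (1/2)^(n-d) − (1/2)^n) is at most −(1/2)^(2n), with equality if and only if c = d = 1. -/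
set_option maxHeartbeats 1000000 in
theorem cycle_covariance_bound (n c d : ℕ) (hn : 3 ≤ n) (hc : 1 ≤ c) (hd : 1 ≤ d)
    (hcd : c + d ≤ n - 1) :
    ((1 : ℝ) / 2) ^ (c + d) + (1 / 2) ^ n -
        ((1 / 2) ^ c + (1 / 2) ^ (n - c) - (1 / 2) ^ n) *
          ((1 / 2) ^ d + (1 / 2) ^ (n - d) - (1 / 2) ^ n) ≤ -(1 / 2) ^ (2 * n) ∧
    (((1 : ℝ) / 2) ^ (c + d) + (1 / 2) ^ n -
        ((1 / 2) ^ c + (1 / 2) ^ (n - c) - (1 / 2) ^ n) *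
          ((1 / 2) ^ d + (1 / 2) ^ (n - d) - (1 / 2) ^ n) = -(1 / 2) ^ (2 * n) ↔
      c = 1 ∧ d = 1) := by
  obtain ⟨k, hk⟩ : ∃ k, n = c + d + k + 1 := ⟨n - 1 - c - d, by omega⟩
  subst hk
  have h1 : c + d + k + 1 - c = d + k + 1 := by omega
  have h2 : c + d + k + 1 - d = c + k + 1 := by omega
  rw [h1, h2]
  set a : ℝ := (1/2) ^ c with ha
  set b : ℝ := (1/2) ^ d with hb
  set z : ℝ := (1/2) ^ k with hz
  have hae : ((1:ℝ)/2) ^ (c + d) = a * b := by rw [pow_add]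
  have hne : ((1:ℝ)/2) ^ (c + d + k + 1) = a * b * z * (1/2) := by
    rw [pow_add, pow_add, pow_add, pow_one]
  have hnc : ((1:ℝ)/2) ^ (d + k + 1) = b * z * (1/2) := by
    rw [pow_add, pow_add, pow_one]
  have hnd : ((1:ℝ)/2) ^ (c + k + 1) = a * z * (1/2) := by
    rw [pow_add, pow_add, pow_one]
  have hn2 : ((1:ℝ)/2) ^ (2 * (c + d + k + 1)) = (a * b * z * (1/2)) ^ 2 := by
    rw [mul_comm, pow_mul, hne]
  rw [hae, hne, hnc, hnd, hn2]
  clear_value a b z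
  have ha2 : a ≤ 1/2 := by
    rw [ha]
    calc ((1:ℝ)/2) ^ c ≤ (1/2) ^ 1 := pow_le_pow_of_le_one (by norm_num) (by norm_num) hc
    _ = 1/2 := pow_one _
  have hb2 : b ≤ 1/2 := by
    rw [hb]
    calc ((1:ℝ)/2) ^ d ≤ (1/2) ^ 1 := pow_le_pow_of_le_one (by norm_num) (by norm_num) hd
    _ = 1/2 := pow_one _
  have hzpos : 0 < z := hz ▸ pow_pos (by norm_num) k
  have hapos : 0 < a := ha ▸ pow_pos (by norm_num) c
  have hbpos : 0 < b := hb ▸ pow_pos (by norm_num) d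
  have key : a * b + a * b * z * (1/2) -
      (a + b * z * (1/2) - a * b * z * (1/2)) * (b + a * z * (1/2) - a * b * z * (1/2)) +
      (a * b * z * (1/2)) ^ 2 =
      -(z/2) * (b - a)^2 - (z/2 + z^2/4) * (a * b * (1 - a - b)) := by ring
  have hab : 0 ≤ 1 - a - b := by linarith
  have habn : 0 ≤ a * b * (1 - a - b) := by positivity
  constructor
  · nlinarith [mul_nonneg hzpos.le (sq_nonneg (b - a)),
      mul_nonneg (by positivity : (0:ℝ) ≤ z/2 + z^2/4) habn]
  · constructor
    · intro heq
      have h0 : (z/2) * (b - a)^2 + (z/2 + z^2/4) * (a * b * (1 - a - b)) = 0 := by linarith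
      have t1 : 0 ≤ (z/2) * (b - a)^2 := by positivity
      have t2 : 0 ≤ (z/2 + z^2/4) * (a * b * (1 - a - b)) :=
        mul_nonneg (by positivity) habn
      have e1 : (b - a)^2 = 0 := by
        have h3 : (z/2) * (b - a)^2 = 0 := by linarith
        exact (mul_eq_zero.mp h3).resolve_left (by positivity)
      have e2 : 1 - a - b = 0 := by
        have h4 : (z/2 + z^2/4) * (a * b * (1 - a - b)) = 0 := by linarith
        have h5 : a * b * (1 - a - b) = 0 :=
          (mul_eq_zero.mp h4).resolve_left (by positivity)
        have h6 : (1 - a - b) = 0 :=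
          (mul_eq_zero.mp h5).resolve_left (by positivity)
        exact h6
      have hba : b = a := by
        have := pow_eq_zero_iff (n := 2) (by norm_num) |>.mp e1
        linarith
      have haval : a = 1/2 := by linarith
      have hc1 : c = 1 := by
        by_contra hne1
        have hc2 : 2 ≤ c := by omega
        have h7 : ((1:ℝ)/2)^c ≤ (1/2 : ℝ)^2 :=
          pow_le_pow_of_le_one (by norm_num) (by norm_num) hc2
        rw [← ha, haval] at h7
        norm_num at h7
      have hd1 : d = 1 := by
        by_contra hne1
        have hd2 : 2 ≤ d := by omega
        have h7 : ((1:ℝ)/2)^d ≤ (1/2 : ℝ)^2 :=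
          pow_le_pow_of_le_one (by norm_num) (by norm_num) hd2
        rw [← hb, hba, haval] at h7
        norm_num at h7
      exact ⟨hc1, hd1⟩
    · rintro ⟨hc1, hd1⟩
      have : a = 1/2 := by rw [ha, hc1, pow_one]
      have : b = 1/2 := by rw [hb, hd1, pow_one]
      subst hc1 hd1
      simp only [pow_one] at ha hb
      rw [ha, hb]
      ring
end
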